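/- Let c be any reachable configuration of the line-rotating Turning Machine L³_n, with states s_c(m_i) and positions p_i. Then the Turning Machine T_n whose initial configuration has pos(m_i)=(i,0) and initial state 3 − s_c(m_i) for every i computes the target configuration whose positions are p₀,…,p_{n−1} and whose states are all 0. -/

import Mathlib

namespace TuringMachineFolding

/-- Points of the triangular grid, coordinatised by `ℤ × ℤ`. -/
abbrev Pt : Type := ℤ × ℤ

/-- The six triangular-grid unit vectors `x, y, w, -x, -y, -w`. -/
def unitVecs : Set Pt :=
  {((1 : ℤ), (0 : ℤ)), (0, 1), (-1, 1), (-1, 0), (0, -1), (1, -1)}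

/-- Anticlockwise rotation by `π/3`: the linear map with `ρ(1,0) = (0,1)`, `ρ(0,1) = (-1,1)`. -/
def rot : Pt → Pt := fun p => (-p.2, p.1 + p.2)

/-- Clockwise rotation by `π/3`, the inverse of `rot`. -/
def rotInv : Pt → Pt := fun p => (p.1 + p.2, -p.1)

/-- `rot` as a permutation of the grid, so that integer powers `rotE ^ t` make sense. -/
def rotE : Equiv.Perm Pt where
  toFun := rot
  invFun := rotInv
  left_inv := by
    rintro ⟨a, b⟩
    simp only [rot, rotInv, Prod.mk.injEq]
    constructor <;> ring
  right_inv := by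
    rintro ⟨a, b⟩
    simp only [rot, rotInv, Prod.mk.injEq]
    constructor <;> ring

/-- Scalar multiple of a grid vector. -/
def zsmulPt (m : ℤ) (p : Pt) : Pt := (m * p.1, m * p.2)

/-- A configuration of a Turning Machine of length `n`: states and positions of the monomers
`m_0, …, m_{n-1}` (indices `≥ n` carry irrelevant junk values), such that `pos m_0 = (0,0)`,
consecutive positions differ by one of the six unit vectors, and positions are pairwise
distinct. -/
structure Config (n : ℕ) where
  st : ℕ → ℤ
  pos : ℕ → Pt
  pos_zero : pos 0 = (0, 0)
  step_unit : ∀ i, i + 1 < n → pos (i + 1) - pos i ∈ unitVecs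
  pos_inj : ∀ i < n, ∀ j < n, pos i = pos j → i = j

/-- The direction of monomer `m_i` (meaningful for `i + 1 < n`). -/
def dir {n : ℕ} (c : Config n) (i : ℕ) : Pt := c.pos (i + 1) - c.pos i

/-- The translation vector applied to the head of `m_i` when the turning rule fires at `m_i`:
`ρ²(d_i)` for a positive state, `ρ⁻²(d_i)` for a negative state. -/
def delta {n : ℕ} (c : Config n) (i : ℕ) : Pt :=
  if 0 < c.st i then rot (rot (dir c i)) else rotInv (rotInv (dir c i))

/-- The state sequence after applying the turning rule at monomer `i`. -/
def nextSt {n : ℕ} (c : Config n) (i : ℕ) : ℕ → ℤ := fun j =>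
  if j = i then (if 0 < c.st i then c.st i - 1 else c.st i + 1) else c.st j

/-- The position sequence after applying the turning rule at monomer `i`. -/
def nextPos {n : ℕ} (c : Config n) (i : ℕ) : ℕ → Pt := fun j =>
  if i < j then c.pos j + delta c i else c.pos j

/-- The turning rule applied at monomer `i` transforms `c` into `c'`.  The requirement that
`c'` is again a `Config` (pairwise distinct positions) encodes that the move is not blocked. -/
def StepAt {n : ℕ} (c : Config n) (i : ℕ) (c' : Config n) : Prop :=
  i < n ∧ c.st i ≠ 0 ∧ (∀ j < n, c'.st j = nextSt c i j) ∧ (∀ j < n, c'.pos j = nextPos c i j)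

/-- The turning rule is applicable to monomer `i` in configuration `c`. -/
def Applicable {n : ℕ} (c : Config n) (i : ℕ) : Prop := ∃ c', StepAt c i c'

/-- Monomer `i` is blocked in `c`: nonzero state, but no applicable rule. -/
def Blocked {n : ℕ} (c : Config n) (i : ℕ) : Prop :=
  i < n ∧ c.st i ≠ 0 ∧ ¬ Applicable c i

/-- One asynchronous step of the machine. -/
def Step {n : ℕ} (c c' : Config n) : Prop := ∃ i, StepAt c i c'

/-- `c` is reachable from `c₀` by a finite sequence of rule applications. -/
def Reachable {n : ℕ} (c₀ c : Config n) : Prop := Relation.ReflTransGen Step c₀ c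

/-- No rule is applicable in `c`. -/
def Terminal {n : ℕ} (c : Config n) : Prop := ∀ i, ¬ Applicable c i

/-- `c` is permanently blocked: some state is nonzero but no monomer admits an applicable rule. -/
def PermBlocked {n : ℕ} (c : Config n) : Prop :=
  (∃ i < n, c.st i ≠ 0) ∧ Terminal c

/-- The Turning Machine with initial configuration `c₀` computes the target configuration `ct`:
every maximal sequence of rule applications from `c₀` is finite and ends in `ct`
(configurations are compared on the meaningful indices `< n`). -/
def Computes {n : ℕ} (c₀ ct : Config n) : Prop :=
  (¬ ∃ f : ℕ → Config n, f 0 = c₀ ∧ ∀ k, Step (f k) (f (k + 1))) ∧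
  ∀ c, Reachable c₀ c → Terminal c → ∀ i < n, c.st i = ct.st i ∧ c.pos i = ct.pos i

/-- The initial configuration with monomers on the x-axis, `pos m_i = (i,0)`, and
initial states `s₀`. -/
def mkInit (n : ℕ) (s₀ : ℕ → ℤ) : Config n where
  st := s₀
  pos := fun i => ((i : ℤ), 0)
  pos_zero := by simp
  step_unit := by
    intro i _
    have h : (((i + 1 : ℕ) : ℤ), (0 : ℤ)) - (((i : ℕ) : ℤ), (0 : ℤ)) = ((1 : ℤ), (0 : ℤ)) := by
      simp only [Prod.mk_sub_mk, Prod.mk.injEq]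
      constructor <;> push_cast <;> ring
    rw [h]
    simp [unitVecs]
  pos_inj := by
    intro i _ j _ h
    have h1 : ((i : ℕ) : ℤ) = ((j : ℕ) : ℤ) := congrArg Prod.fst h
    exact_mod_cast h1

/-- The initial configuration of the line-rotating Turning Machine `L^σ_n`:
`pos m_i = (i,0)`, states `σ` except the last monomer which has state `0`. -/
def lineInit (n : ℕ) (σ : ℤ) : Config n :=
  mkInit n (fun i => if i + 1 = n then 0 else σ)

/-- `Δs`: the number of rule applications made to monomer `i` on the way from `c₀` to `c`
(each application changes the state by one, towards `0`). -/
def dS {n : ℕ} (c₀ c : Config n) (i : ℕ) : ℤ := |c₀.st i - c.st i|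

/-- The set of positions occupied by a configuration. -/
def posSet {n : ℕ} (c : Config n) : Set Pt := {q | ∃ i < n, c.pos i = q}


/-- Adjacency on the triangular grid. -/
def Adj (p q : Pt) : Prop := q - p ∈ unitVecs

/-- The graph induced by the edge relation `E` on the set `S` is connected. -/
def ConnectedIn (E : Pt → Pt → Prop) (S : Set Pt) : Prop :=
  ∀ p ∈ S, ∀ q ∈ S, Relation.ReflTransGen (fun a b => a ∈ S ∧ b ∈ S ∧ E a b) p q

/-- A shape: a finite subset of the grid whose induced graph is connected. -/
def IsShape (S : Set Pt) : Prop := S.Finite ∧ ConnectedIn Adj S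

/-- `y`-monotone shape: the points of each row form a set of consecutive integers. -/
def YMonotone (S : Set Pt) : Prop :=
  ∀ j x₁ x₂ x₃ : ℤ, x₁ ≤ x₂ → x₂ ≤ x₃ → (x₁, j) ∈ S → (x₃, j) ∈ S → (x₂, j) ∈ S

/-- Adjacency along the `x` and `y` axes only. -/
def AdjXY (p q : Pt) : Prop :=
  q - p ∈ ({((1 : ℤ), (0 : ℤ)), (-1, 0), (0, 1), (0, -1)} : Set Pt)

/-- `xy`-connected: connected using only `±x` and `±y` edges. -/
def XYConnected (S : Set Pt) : Prop := ConnectedIn AdjXY S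

/-- The perimeter of a shape: its points having a neighbour outside the shape. -/
def perimeter (S : Set Pt) : Set Pt := {p ∈ S | ∃ v ∈ unitVecs, p + v ∉ S}

/-- Translation of a set of points. -/
def translate (t : Pt) (S : Set Pt) : Set Pt := (fun p => p + t) '' S

/-- The cardinality of the symmetric difference of two sets of points. -/
noncomputable def symmDiffCard (A B : Set Pt) : ℕ := ((A \ B) ∪ (B \ A)).ncard

/-- Error of a configuration w.r.t. a shape: the least cardinality, over all translations `t`,
of the symmetric difference of `S + t` and the set of monomer positions. -/
noncomputable def foldError {n : ℕ} (S : Set Pt) (c : Config n) : ℕ :=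
  sInf {m | ∃ t : Pt, symmDiffCard (translate t S) (posSet c) = m}

/-- The allowed steps of a `yw`-chain. -/
def ywSteps : Set Pt := {((0 : ℤ), (1 : ℤ)), (-1, 1)}

/-- `c 0, …, c (k-1)` is a `yw`-separator of the `y`-monotone shape `S`: a `yw`-chain inside `S`
from the bottommost row of `S` to the topmost row of `S`. -/
def IsYWSep (S : Set Pt) (k : ℕ) (c : ℕ → Pt) : Prop :=
  0 < k ∧ (∀ ℓ, ℓ + 1 < k → c (ℓ + 1) - c ℓ ∈ ywSteps) ∧ (∀ ℓ < k, c ℓ ∈ S) ∧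
    (∀ p ∈ S, (c 0).2 ≤ p.2) ∧ (∀ p ∈ S, p.2 ≤ (c (k - 1)).2)

/-- The shape `S` scaled by a factor `2`. -/
def scale2 (S : Set Pt) : Set Pt :=
  {q | ∃ p ∈ S, ∃ a b : ℤ, (a = 0 ∨ a = 1) ∧ (b = 0 ∨ b = 1) ∧ q = (2 * p.1 + a, 2 * p.2 + b)}

/-- The right boundary of a shape: the rightmost point of each nonempty row. -/
def rightBdry (S : Set Pt) : Set Pt := {p ∈ S | ∀ q ∈ S, q.2 = p.2 → q.1 ≤ p.1}

/-- The left boundary of a shape: the leftmost point of each nonempty row. -/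
def leftBdry (S : Set Pt) : Set Pt := {p ∈ S | ∀ q ∈ S, q.2 = p.2 → p.1 ≤ q.1}

/-- The "almost rectangle" `R_{k'}` from the definition of the `1`-gap spiral. -/
def spiralRing (k : ℤ) : Set Pt :=
  (({p : Pt | (p.2 = 2 * k ∨ p.2 = -(2 * k)) ∧ -(2 * k) ≤ p.1 ∧ p.1 ≤ 2 * k - 1} ∪
      {p : Pt | (p.1 = -(2 * k) ∨ p.1 = 2 * k - 1) ∧ -(2 * k) ≤ p.2 ∧ p.2 ≤ 2 * k}) ∪
      {(2 * k - 2, -(2 * k) + 2), (2 * k, -(2 * k)), (2 * k + 1, -(2 * k))}) \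
    {(2 * k - 1, -(2 * k) + 1)}

/-- The `k`-turn `1`-gap spiral `S_k`. -/
def spiral (k : ℕ) : Set Pt := ⋃ j ∈ Finset.Icc 1 k, spiralRing (j : ℤ)

/-- The base turning numbers `t_i` of the inside-to-outside sequence. -/
def tIn (t0 : ℤ) : ℕ → ℤ
  | 0 => t0
  | i + 1 => tIn t0 i + (if (i + 1) % 2 = 0 then 2 else 1)

/-- The inside-to-outside turning number sequence
`T_in(t₀) = [t₀]¹,[t₁]²,…,[t_{4k}]^{4k+1}, t_{4k}`. -/
def TInList (k : ℕ) (t0 : ℤ) : List ℤ :=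
  ((List.range (4 * k + 1)).flatMap fun i => List.replicate (i + 1) (tIn t0 i)) ++ [tIn t0 (4 * k)]

/-- The base turning numbers `t_i` of the outside-to-inside sequence. -/
def tOut (t0 : ℤ) : ℕ → ℤ
  | 0 => t0
  | i + 1 => tOut t0 i - (if (i + 1) % 2 = 0 then 1 else 2)

/-- The outside-to-inside turning number sequence
`T_out(t₀) = t₀,[t₀]^{4k+1},[t₁]^{4k},…,[t_{4k}]¹`. -/
def TOutList (k : ℕ) (t0 : ℤ) : List ℤ :=
  t0 :: ((List.range (4 * k + 1)).flatMap fun i => List.replicate (4 * k + 1 - i) (tOut t0 i))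

/-- The cross shape with arm length `a`. -/
def cross (a : ℤ) : Set Pt :=
  {p : Pt | p.2 = 0 ∧ -a ≤ p.1 ∧ p.1 ≤ a} ∪ {p : Pt | p.1 = 0 ∧ -a ≤ p.2 ∧ p.2 ≤ a}

/-- A positive zig-zag path: pairwise distinct points with steps in `{x, -x, y, w}`. -/
def PosZigZag (n : ℕ) (p : ℕ → Pt) : Prop :=
  (∀ i < n, ∀ j < n, p i = p j → i = j) ∧
    ∀ i, i + 1 < n → p (i + 1) - p i ∈ ({((1 : ℤ), (0 : ℤ)), (-1, 0), (0, 1), (-1, 1)} : Set Pt)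

/-- A negative zig-zag path: pairwise distinct points with steps in `{x, -x, -y, -w}`. -/
def NegZigZag (n : ℕ) (p : ℕ → Pt) : Prop :=
  (∀ i < n, ∀ j < n, p i = p j → i = j) ∧
    ∀ i, i + 1 < n → p (i + 1) - p i ∈ ({((1 : ℤ), (0 : ℤ)), (-1, 0), (0, -1), (1, -1)} : Set Pt)


/-! A turn at `m_i` rotates `d_i` by `π/3` and leaves all other directions alone. Starting from
the states `3 - s_c(m_i)`, every direction is `x` turned anticlockwise at most three times in total,
so every reachable configuration is `y`-monotone, and a turn that lifts the head strictly above
`m_i` cannot be blocked. Hence in a terminal configuration every pending turn is the last turn of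
a direction `w`, taking it to `-x` as in `c`. At the first pending turn, `c` coincides with the
configuration this turn produces up to the blocking monomer, which therefore lands in `c` on a
monomer that the turn keeps fixed, contradicting self-avoidance of `c`. -/

lemma eq_of_sub_succ_eq {G : Type*} [AddGroup G] {p q : ℕ → G} (h0 : p 0 = q 0) {k : ℕ}
    (h : ∀ m < k, p (m + 1) - p m = q (m + 1) - q m) : p k = q k := by
  induction k with
  | zero => exact h0
  | succ k ih =>
    rw [← sub_add_cancel (p (k + 1)) (p k), ← sub_add_cancel (q (k + 1)) (q k), h k k.lt_succ_self,
      ih fun m hm => h m (hm.trans k.lt_succ_self)]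

lemma rot_mem_unitVecs {v : Pt} (hv : v ∈ unitVecs) : rot v ∈ unitVecs := by
  simp only [unitVecs, Set.mem_insert_iff, Set.mem_singleton_iff] at hv
  rcases hv with rfl | rfl | rfl | rfl | rfl | rfl <;> simp [rot, unitVecs]

lemma rotInv_mem_unitVecs {v : Pt} (hv : v ∈ unitVecs) : rotInv v ∈ unitVecs := by
  simp only [unitVecs, Set.mem_insert_iff, Set.mem_singleton_iff] at hv
  rcases hv with rfl | rfl | rfl | rfl | rfl | rfl <;> simp [rotInv, unitVecs]

section Moves

variable {n : ℕ}

lemma pos_succ (c : Config n) (i : ℕ) : c.pos (i + 1) = c.pos i + dir c i := by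
  simp [dir]

lemma mkInit_st (s₀ : ℕ → ℤ) : (mkInit n s₀).st = s₀ := rfl

lemma dir_mkInit (s₀ : ℕ → ℤ) (i : ℕ) : dir (mkInit n s₀) i = (1, 0) := by
  simp [dir, mkInit]

lemma dir_add_delta (c : Config n) (i : ℕ) :
    dir c i + delta c i = if 0 < c.st i then rot (dir c i) else rotInv (dir c i) := by
  unfold delta
  split_ifs <;> ext <;> simp only [rot, rotInv, Prod.fst_add, Prod.snd_add] <;> ring

lemma dir_add_delta_mem_unitVecs (c : Config n) {i : ℕ} (hi : i + 1 < n) :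
    dir c i + delta c i ∈ unitVecs := by
  rw [dir_add_delta]
  split_ifs
  exacts [rot_mem_unitVecs (c.step_unit i hi), rotInv_mem_unitVecs (c.step_unit i hi)]

lemma nextPos_succ_sub_nextPos (c : Config n) (i j : ℕ) :
    nextPos c i (j + 1) - nextPos c i j = if j = i then dir c i + delta c i else dir c j := by
  unfold nextPos dir
  rcases lt_trichotomy i j with h | rfl | h
  · simp only [h, h.trans j.lt_succ_self, h.ne', if_true, if_false]
    abel
  · simp only [i.lt_succ_self, lt_irrefl, if_true, if_false]
    abel
  · simp [h.ne, h.not_gt, Nat.not_lt.2 h]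

lemma dir_of_stepAt {c c' : Config n} {i j : ℕ} (h : StepAt c i c') (hj : j + 1 < n) :
    dir c' j = if j = i then dir c i + delta c i else dir c j := by
  obtain ⟨-, -, -, hpos⟩ := h
  rw [dir, hpos _ hj, hpos _ (by omega), nextPos_succ_sub_nextPos]

lemma applicable_of_forall_ne (d : Config n) {i : ℕ} (hi : i < n) (hst : d.st i ≠ 0)
    (hfree : ∀ j₁ < n, ∀ j₂ ≤ i, i < j₁ → d.pos j₁ + delta d i ≠ d.pos j₂) :
    Applicable d i := by
  refine ⟨⟨nextSt d i, nextPos d i, ?_, ?_, ?_⟩, hi, hst, fun _ _ => rfl, fun _ _ => rfl⟩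
  · simp [nextPos, d.pos_zero]
  · intro j hj
    rw [nextPos_succ_sub_nextPos]
    split_ifs with h
    · exact h ▸ dir_add_delta_mem_unitVecs d hj
    · exact d.step_unit j hj
  · intro j₁ hj₁ j₂ hj₂ heq
    simp only [nextPos] at heq
    split_ifs at heq with h₁ h₂ h₂
    · exact d.pos_inj j₁ hj₁ j₂ hj₂ (add_right_cancel heq)
    · exact absurd heq (hfree j₁ hj₁ j₂ (not_lt.1 h₂) h₁)
    · exact absurd heq.symm (hfree j₂ hj₂ j₁ (not_lt.1 h₁) h₂)
    · exact d.pos_inj j₁ hj₁ j₂ hj₂ heq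

lemma applicable_of_monotoneOn {d : Config n}
    (hmono : MonotoneOn (fun j => (d.pos j).2) (Set.Iio n)) {i : ℕ} (hi : i + 1 < n)
    (hst : d.st i ≠ 0) (hup : 0 < (dir d i + delta d i).2) : Applicable d i := by
  refine applicable_of_forall_ne d (by omega) hst fun j₁ hj₁ j₂ hj₂ hij heq => ?_
  have hlow : (d.pos j₂).2 ≤ (d.pos i).2 :=
    hmono (Set.mem_Iio.2 (by omega)) (Set.mem_Iio.2 (by omega)) hj₂
  have hhigh : (d.pos (i + 1)).2 ≤ (d.pos j₁).2 := hmono (Set.mem_Iio.2 hi) (Set.mem_Iio.2 hj₁) hij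
  have hsnd := congrArg Prod.snd heq
  rw [pos_succ] at hhigh
  simp only [Prod.snd_add] at hsnd hhigh hup
  linarith

lemma totalState_lt_of_step {c c' : Config n} (h : Step c c') :
    ∑ i ∈ Finset.range n, (c'.st i).natAbs < ∑ i ∈ Finset.range n, (c.st i).natAbs := by
  obtain ⟨i, hi, hne, hst, -⟩ := h
  have hi' : i ∈ Finset.range n := Finset.mem_range.2 hi
  rw [← Finset.sum_erase_add _ _ hi', ← Finset.sum_erase_add _ _ hi',
    Finset.sum_congr rfl fun j hj => by
      rw [hst j (Finset.mem_range.1 (Finset.mem_of_mem_erase hj)), nextSt,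
        if_neg (Finset.ne_of_mem_erase hj)]]
  rw [hst i hi, nextSt, if_pos rfl]
  split_ifs <;> omega

lemma not_exists_step_seq : ¬ ∃ f : ℕ → Config n, ∀ k, Step (f k) (f (k + 1)) := fun ⟨f, hf⟩ =>
  not_strictAnti_of_wellFoundedLT (fun k => ∑ i ∈ Finset.range n, ((f k).st i).natAbs)
    (strictAnti_nat_of_succ_lt fun k => totalState_lt_of_step (hf k))

lemma Reachable.st_mem_Icc_and_dir_eq {c₀ d : Config n} (h₀ : ∀ i < n, 0 ≤ c₀.st i)
    (h : Reachable c₀ d) :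
    ∀ i < n, d.st i ∈ Set.Icc 0 (c₀.st i) ∧
      (i + 1 < n → dir d i = rot^[(c₀.st i - d.st i).toNat] (dir c₀ i)) := by
  induction h with
  | refl => exact fun i hi => ⟨⟨h₀ i hi, le_rfl⟩, fun _ => by simp⟩
  | @tail b _ _ hstep ih =>
    obtain ⟨i, hstep⟩ := hstep
    intro j hj
    obtain ⟨⟨hb0, hb⟩, hbdir⟩ := ih j hj
    have hst := hstep.2.2.1 j hj
    by_cases hji : j = i
    · subst hji
      have hpos : 0 < b.st j := lt_of_le_of_ne hb0 (Ne.symm hstep.2.1)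
      rw [nextSt, if_pos rfl, if_pos hpos] at hst
      refine ⟨⟨by omega, by omega⟩, fun hj1 => ?_⟩
      rw [dir_of_stepAt hstep hj1, if_pos rfl, dir_add_delta, if_pos hpos, hbdir hj1, hst,
        show (c₀.st j - (b.st j - 1)).toNat = (c₀.st j - b.st j).toNat + 1 by omega,
        Function.iterate_succ_apply']
    · rw [nextSt, if_neg hji] at hst
      refine ⟨⟨hst ▸ hb0, hst ▸ hb⟩, fun hj1 => ?_⟩
      rw [dir_of_stepAt hstep hj1, if_neg hji, hst, hbdir hj1]

lemma Reachable.st_mem_Icc_and_dir_eq_of_mkInit {s₀ : ℕ → ℤ} {d : Config n}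
    (h₀ : ∀ i < n, 0 ≤ s₀ i) (h : Reachable (mkInit n s₀) d) :
    ∀ i < n, d.st i ∈ Set.Icc 0 (s₀ i) ∧
      (i + 1 < n → dir d i = rot^[(s₀ i - d.st i).toNat] (1, 0)) := by
  simpa only [mkInit_st, dir_mkInit] using h.st_mem_Icc_and_dir_eq h₀

end Moves

lemma snd_rot_iterate_nonneg {k : ℕ} (hk : k ≤ 3) : 0 ≤ (rot^[k] (1, 0)).2 := by
  interval_cases k <;> decide

section Folding

/- `c` is `d` with all pending turns carried out, and in total every direction turns at most
three times from `x`. -/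
variable {n : ℕ} {c d : Config n} (hst : ∀ i < n, 0 ≤ d.st i)
  (hd : ∀ i, i + 1 < n → ∃ k, k + (d.st i).toNat ≤ 3 ∧ dir d i = rot^[k] (1, 0))
  (hc : ∀ i, i + 1 < n → dir c i = rot^[(d.st i).toNat] (dir d i))

include hd in
lemma monotoneOn_snd_pos : MonotoneOn (fun j => (d.pos j).2) (Set.Iio n) := by
  refine monotoneOn_of_le_succ Set.ordConnected_Iio fun i _ _ hi => ?_
  obtain ⟨k, hk, hdir⟩ := hd i (by simpa using hi)
  simp only [Order.succ_eq_add_one, pos_succ, hdir, Prod.snd_add]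
  linarith [snd_rot_iterate_nonneg (k := k) (by omega)]

include hc in
lemma pos_eq_nextPos {i j : ℕ} (hj : j < n) (hone : d.st i = 1)
    (hzero : ∀ m < j, m ≠ i → d.st m = 0) : c.pos j = nextPos d i j :=
  eq_of_sub_succ_eq (by simp [nextPos, c.pos_zero, d.pos_zero]) fun m hm => by
    change dir c m = _
    rw [nextPos_succ_sub_nextPos, hc m (by omega)]
    split_ifs with hmi
    · rw [hmi, hone, dir_add_delta, if_pos (by omega)]
      rfl
    · rw [hzero m hm hmi]
      rfl

include hst hd in
lemma st_eq_one_and_dir_eq_of_terminal (hterm : Terminal d) {i : ℕ} (hi : i < n)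
    (hne : d.st i ≠ 0) :
    i + 1 < n ∧ d.st i = 1 ∧ dir d i = (-1, 1) := by
  have hi1 : i + 1 < n := by
    by_contra
    exact hterm i (applicable_of_forall_ne d hi hne fun j₁ hj₁ _ _ hij => by omega)
  obtain ⟨k, hk, hdir⟩ := hd i hi1
  have hpos : 0 < d.st i := lt_of_le_of_ne (hst i hi) (Ne.symm hne)
  have hblocked : ¬ 0 < (rot (rot^[k] (1, 0))).2 := fun hup =>
    hterm i (applicable_of_monotoneOn (monotoneOn_snd_pos hd) hi1 hne
      (by rwa [dir_add_delta, if_pos hpos, hdir]))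
  have hk2 : k = 2 := by
    have : k ≤ 2 := by omega
    interval_cases k <;> first | rfl | exact absurd (by decide) hblocked
  refine ⟨hi1, by omega, by rw [hdir, hk2]; decide⟩

include hst hd hc in
lemma applicable_of_first_pending (hterm : Terminal d) {i : ℕ} (hi : i < n)
    (hne : d.st i ≠ 0) (hmin : ∀ m < i, d.st m = 0) : Applicable d i := by
  obtain ⟨hi1, hone, hw⟩ := st_eq_one_and_dir_eq_of_terminal hst hd hterm hi hne
  have hmono := monotoneOn_snd_pos hd
  have hrise : ∀ m, m + 1 < n → d.st m ≠ 0 → (d.pos (m + 1)).2 = (d.pos m).2 + 1 :=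
    fun m hm hne => by
      rw [pos_succ, (st_eq_one_and_dir_eq_of_terminal hst hd hterm (by omega) hne).2.2]
      rfl
  refine applicable_of_forall_ne d hi hne fun j₁ hj₁ j₂ hj₂ hij heq => ?_
  have hδ : delta d i = (0, -1) := by rw [delta, if_pos (by omega), hw]; decide
  have hlow : (d.pos j₂).2 ≤ (d.pos i).2 :=
    hmono (Set.mem_Iio.2 (by omega)) (Set.mem_Iio.2 hi) hj₂
  have hhigh : (d.pos (i + 1)).2 ≤ (d.pos j₁).2 :=
    hmono (Set.mem_Iio.2 hi1) (Set.mem_Iio.2 hj₁) hij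
  have hsnd : (d.pos j₁).2 - 1 = (d.pos j₂).2 := by
    simpa [hδ, sub_eq_add_neg] using congrArg Prod.snd heq
  have hflat : ∀ m, i < m → m < j₁ → d.st m = 0 := by
    intro m him hmj
    by_contra hm
    have h1 : (d.pos (i + 1)).2 ≤ (d.pos m).2 :=
      hmono (Set.mem_Iio.2 hi1) (Set.mem_Iio.2 (by omega)) him
    have h2 : (d.pos (m + 1)).2 ≤ (d.pos j₁).2 :=
      hmono (Set.mem_Iio.2 (by omega)) (Set.mem_Iio.2 hj₁) hmj
    have := hrise m (by omega) hm
    have := hrise i hi1 hne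
    omega
  have hcpos : ∀ j ≤ j₁, c.pos j = nextPos d i j := fun j hj =>
    pos_eq_nextPos hc (by omega) hone fun m hm hmi => by
      rcases lt_or_gt_of_ne hmi with h | h
      exacts [hmin m h, hflat m h (by omega)]
  have hcoll : c.pos j₁ = c.pos j₂ := by
    rw [hcpos j₁ le_rfl, hcpos j₂ (by omega), nextPos, nextPos, if_pos hij, if_neg (by omega), heq]
  exact absurd (c.pos_inj j₁ hj₁ j₂ (by omega) hcoll) (by omega)

include hst hd hc in
lemma st_eq_zero_of_terminal (hterm : Terminal d) : ∀ i < n, d.st i = 0 := by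
  by_contra! hex
  obtain ⟨hi, hne⟩ := Nat.find_spec hex
  exact hterm _ (applicable_of_first_pending hst hd hc hterm hi hne fun m hm => by
    by_contra hm'
    exact Nat.find_min hex hm ⟨by omega, hm'⟩)

include hc in
lemma pos_eq_of_st_eq_zero (hzero : ∀ i < n, d.st i = 0) : ∀ i < n, d.pos i = c.pos i :=
  fun _ hi => eq_of_sub_succ_eq (by rw [c.pos_zero, d.pos_zero]) fun m hm => by
    change dir d m = dir c m
    rw [hc m (by omega), hzero m (by omega)]
    rfl

end Folding

/-- For any reachable configuration `c` of `L³_n`, the Turning Machine with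
initial positions `(i,0)` and initial states `3 - s_c(m_i)` computes the target configuration
whose positions are those of `c` and whose states are all `0`. -/
theorem reachable_of_L3_is_foldable (n : ℕ) (c : Config n)
    (hc : Reachable (lineInit n 3) c) :
    ∃ ct : Config n, Computes (mkInit n (fun i => 3 - c.st i)) ct ∧
      ∀ i < n, ct.st i = 0 ∧ ct.pos i = c.pos i := by
  have hcinv := hc.st_mem_Icc_and_dir_eq_of_mkInit fun i _ => by split_ifs <;> norm_num
  have hc3 : ∀ i < n, c.st i ∈ Set.Icc 0 3 := fun i hi => by
    obtain ⟨h0, h3⟩ := (hcinv i hi).1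
    split_ifs at h3 <;> exact ⟨h0, by omega⟩
  refine ⟨⟨fun _ => 0, c.pos, c.pos_zero, c.step_unit, c.pos_inj⟩,
    ⟨fun ⟨f, _, hf⟩ => not_exists_step_seq ⟨f, hf⟩, fun d hd hterm => ?_⟩, fun _ _ => ⟨rfl, rfl⟩⟩
  have hdinv := hd.st_mem_Icc_and_dir_eq_of_mkInit fun i hi => by linarith [(hc3 i hi).2]
  have hbounds : ∀ i < n, 0 ≤ c.st i ∧ 0 ≤ d.st i ∧ d.st i ≤ 3 - c.st i :=
    fun i hi => ⟨(hc3 i hi).1, (hdinv i hi).1.1, (hdinv i hi).1.2⟩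
  have hcd : ∀ i, i + 1 < n → dir c i = rot^[(d.st i).toNat] (dir d i) := fun i hi => by
    rw [(hcinv i (by omega)).2 hi, (hdinv i (by omega)).2 hi, ← Function.iterate_add_apply,
      if_neg (by omega)]
    have := hbounds i (by omega)
    congr 1
    omega
  have hzero := st_eq_zero_of_terminal (fun i hi => (hbounds i hi).2.1)
    (fun i hi => ⟨(3 - c.st i - d.st i).toNat, by have := hbounds i (by omega); omega,
      (hdinv i (by omega)).2 hi⟩) hcd hterm
  exact fun i hi => ⟨hzero i hi, pos_eq_of_st_eq_zero hcd hzero i hi⟩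

end TuringMachineFolding
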